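/- arXiv:0901.2551 — 2 statements merged into one kernel-verified Lean document; each statement's English description precedes it below -/
import Mathlib

section
/- For every first-order formula φ built from atomic formulas, ¬, ∧, ∨, ∀ (with ∃x ψ expressed as ¬∀x ¬ψ), the Krivine-style translation φ^Kr = ¬φ_Kr is equivalent to the Gödel-Gentzen translation φ^N in minimal logic. -/
/-- First-order formulas (de Bruijn indices for variables; atoms are
predicate symbols applied to lists of variables). `¬φ` abbreviates `φ → ⊥`. -/
inductive Fm : Type where
  | atom : ℕ → List ℕ → Fm
  | falsum : Fm
  | and : Fm → Fm → Fm
  | or : Fm → Fm → Fm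
  | imp : Fm → Fm → Fm
  | all : Fm → Fm
  | ex : Fm → Fm
  deriving DecidableEq

namespace Fm

/-- negation: ¬φ := φ → ⊥ -/
def neg (p : Fm) : Fm := imp p falsum

/-- biconditional, as a conjunction of two implications -/
def iff (p q : Fm) : Fm := and (imp p q) (imp q p)

/-- rename free de Bruijn variables -/
def rename (f : ℕ → ℕ) : Fm → Fm
  | atom i a => atom i (a.map f)
  | falsum => falsum
  | and p q => and (rename f p) (rename f q)
  | or p q => or (rename f p) (rename f q)
  | imp p q => imp (rename f p) (rename f q)
  | all p => all (rename (fun n => match n with | 0 => 0 | m+1 => f m + 1) p)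
  | ex p => ex (rename (fun n => match n with | 0 => 0 | m+1 => f m + 1) p)

/-- shift all free variables up by one -/
def lift (p : Fm) : Fm := rename Nat.succ p

/-- substitute the variable `k` for de Bruijn index 0 -/
def inst (k : ℕ) (p : Fm) : Fm := rename (fun n => match n with | 0 => k | m+1 => m) p

end Fm

inductive Logic : Type where
  | minimal | intuitionistic | classical
  deriving DecidableEq

/-- Natural deduction for minimal / intuitionistic / classical first-order logic:
minimal logic has no ex falso rule; intuitionistic logic adds ex falso;
classical logic further adds excluded middle. -/
inductive Pf : Logic → Set Fm → Fm → Prop where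
  | ax {L Γ p} : p ∈ Γ → Pf L Γ p
  | andI {L Γ p q} : Pf L Γ p → Pf L Γ q → Pf L Γ (.and p q)
  | andE1 {L Γ p q} : Pf L Γ (.and p q) → Pf L Γ p
  | andE2 {L Γ p q} : Pf L Γ (.and p q) → Pf L Γ q
  | orI1 {L Γ p q} : Pf L Γ p → Pf L Γ (.or p q)
  | orI2 {L Γ p q} : Pf L Γ q → Pf L Γ (.or p q)
  | orE {L Γ p q r} : Pf L Γ (.or p q) → Pf L (insert p Γ) r → Pf L (insert q Γ) r →
      Pf L Γ r
  | impI {L Γ p q} : Pf L (insert p Γ) q → Pf L Γ (.imp p q)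
  | impE {L Γ p q} : Pf L Γ (.imp p q) → Pf L Γ p → Pf L Γ q
  | allI {L Γ p} : Pf L (Fm.lift '' Γ) p → Pf L Γ (.all p)
  | allE {L Γ p} (k : ℕ) : Pf L Γ (.all p) → Pf L Γ (p.inst k)
  | exI {L Γ p} (k : ℕ) : Pf L Γ (p.inst k) → Pf L Γ (.ex p)
  | exE {L Γ p r} : Pf L Γ (.ex p) → Pf L (insert p (Fm.lift '' Γ)) r.lift → Pf L Γ r
  | exfalso {L Γ p} : L ≠ .minimal → Pf L Γ .falsum → Pf L Γ p
  | em {Γ p} : Pf .classical Γ (.or p (.neg p))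

/-- The Gödel–Gentzen negative translation. -/
def N : Fm → Fm
  | .atom i a => .neg (.neg (.atom i a))
  | .falsum => .falsum
  | .and p q => .and (N p) (N q)
  | .or p q => .neg (.and (.neg (N p)) (.neg (N q)))
  | .imp p q => .imp (N p) (N q)
  | .all p => .all (N p)
  | .ex p => .neg (.all (.neg (N p)))

/-- The inner Krivine translation φ_Kr (representing the negation of φ):
θ_Kr = ¬θ for atomic θ; (¬φ)_Kr = ¬φ_Kr; (φ ∧ ψ)_Kr = φ_Kr ∨ ψ_Kr;
(φ ∨ ψ)_Kr = φ_Kr ∧ ψ_Kr; (∀x φ)_Kr = ∃x φ_Kr.  (The clauses for `falsum`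
and `ex` are irrelevant junk: the translation is only applied to formulas in
the ¬, ∧, ∨, ∀ fragment, and on that fragment the `imp` clause below computes
exactly (¬φ)_Kr = ¬φ_Kr.) -/
def KrB : Fm → Fm
  | .atom i a => .neg (.atom i a)
  | .imp p q => .imp (KrB p) q
  | .and p q => .or (KrB p) (KrB q)
  | .or p q => .and (KrB p) (KrB q)
  | .all p => .ex (KrB p)
  | .falsum => .falsum
  | .ex p => .ex p

/-- The Krivine translation φ^Kr := ¬φ_Kr. -/
def Kr (p : Fm) : Fm := .neg (KrB p)

/-- The fragment of formulas built from atoms by ¬, ∧, ∨, ∀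
(with ∃x ψ expressed as ¬∀x ¬ψ). -/
inductive KrFrag : Fm → Prop where
  | atom (i a) : KrFrag (.atom i a)
  | neg {p} : KrFrag p → KrFrag (Fm.neg p)
  | and {p q} : KrFrag p → KrFrag q → KrFrag (.and p q)
  | or {p q} : KrFrag p → KrFrag q → KrFrag (.or p q)
  | all {p} : KrFrag p → KrFrag (.all p)


/-!
On the ¬, ∧, ∨, ∀ fragment both translations commute with the connectives up to three
laws of minimal logic: `¬(A ∨ B) ↔ ¬A ∧ ¬B` (the `∧` case), `¬(A ∧ B) ↔ ¬(¬¬A ∧ ¬¬B)`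
(the `∨` case, since `¬N φ ↔ ¬¬φ_Kr` by induction) and `¬∃x A ↔ ∀x ¬A` (the `∀` case).
None of them needs ex falso, so induction on the formula gives `φ^Kr ↔ φ^N`.
-/

namespace Fm

abbrev liftUnder (f : ℕ → ℕ) : ℕ → ℕ := fun n => match n with | 0 => 0 | m + 1 => f m + 1

theorem rename_rename (f g : ℕ → ℕ) (p : Fm) :
    rename f (rename g p) = rename (fun n => f (g n)) p := by
  induction p generalizing f g with
  | atom i a => simp only [rename, List.map_map]; rfl
  | falsum => rfl
  | and p q ihp ihq | or p q ihp ihq | imp p q ihp ihq => simp only [rename, ihp, ihq]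
  | all p ih | ex p ih =>
    simp only [rename, ih]
    congr 2
    funext n
    cases n <;> rfl

theorem rename_eq_self {f : ℕ → ℕ} (hf : ∀ n, f n = n) (p : Fm) : rename f p = p := by
  induction p generalizing f with
  | atom i a => simp only [rename, funext hf, List.map_id']
  | falsum => rfl
  | and p q ihp ihq | or p q ihp ihq | imp p q ihp ihq => simp only [rename, ihp hf, ihq hf]
  | all p ih | ex p ih =>
    simp only [rename]
    rw [ih fun n => by cases n <;> simp [hf]]

theorem inst_zero_rename_liftUnder_succ (p : Fm) : (rename (liftUnder Nat.succ) p).inst 0 = p := by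
  rw [inst, rename_rename]
  exact rename_eq_self (fun n => by cases n <;> rfl) p

end Fm

namespace Pf

variable {L : Logic} {Γ Δ : Set Fm} {p q r : Fm}

theorem hyp₀ : Pf L (insert p Γ) p := .ax (Set.mem_insert _ _)

theorem hyp₁ : Pf L (insert q (insert p Γ)) p := .ax (by simp)

theorem hyp₂ : Pf L (insert r (insert q (insert p Γ))) p := .ax (by simp)

theorem weaken (h : Pf L Γ p) (s : Γ ⊆ Δ) : Pf L Δ p := by
  induction h generalizing Δ with
  | ax hm => exact .ax (s hm)
  | andI _ _ ih₁ ih₂ => exact .andI (ih₁ s) (ih₂ s)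
  | andE1 _ ih => exact .andE1 (ih s)
  | andE2 _ ih => exact .andE2 (ih s)
  | orI1 _ ih => exact .orI1 (ih s)
  | orI2 _ ih => exact .orI2 (ih s)
  | orE _ _ _ ih ih₁ ih₂ =>
    exact .orE (ih s) (ih₁ (Set.insert_subset_insert s)) (ih₂ (Set.insert_subset_insert s))
  | impI _ ih => exact .impI (ih (Set.insert_subset_insert s))
  | impE _ _ ih₁ ih₂ => exact .impE (ih₁ s) (ih₂ s)
  | allI _ ih => exact .allI (ih (Set.image_mono s))
  | allE k _ ih => exact .allE k (ih s)
  | exI k _ ih => exact .exI k (ih s)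
  | exE _ _ ih₁ ih₂ => exact .exE (ih₁ s) (ih₂ (Set.insert_subset_insert (Set.image_mono s)))
  | exfalso hL _ ih => exact .exfalso hL (ih s)
  | em => exact .em

theorem weaken_insert (h : Pf L Γ p) : Pf L (insert q Γ) p :=
  h.weaken (Set.subset_insert q Γ)

theorem of_lift_all (h : Pf L Γ (Fm.all p).lift) : Pf L Γ p := by
  simpa only [Fm.inst_zero_rename_liftUnder_succ] using h.allE 0

theorem lift_ex (h : Pf L Γ p) : Pf L Γ (Fm.ex p).lift :=
  .exI 0 (by rwa [Fm.inst_zero_rename_liftUnder_succ])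

theorem iff_intro (h₁ : Pf L (insert p Γ) q) (h₂ : Pf L (insert q Γ) p) :
    Pf L Γ (Fm.iff p q) :=
  .andI (.impI h₁) (.impI h₂)

theorem iff_mp (h : Pf L Γ (Fm.iff p q)) (hp : Pf L Γ p) : Pf L Γ q := .impE h.andE1 hp

theorem iff_mpr (h : Pf L Γ (Fm.iff p q)) (hq : Pf L Γ q) : Pf L Γ p := .impE h.andE2 hq

theorem iff_refl : Pf L Γ (Fm.iff p p) := iff_intro hyp₀ hyp₀

theorem iff_trans (h₁ : Pf L Γ (Fm.iff p q)) (h₂ : Pf L Γ (Fm.iff q r)) : Pf L Γ (Fm.iff p r) :=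
  iff_intro (h₂.weaken_insert.iff_mp (h₁.weaken_insert.iff_mp hyp₀))
    (h₁.weaken_insert.iff_mpr (h₂.weaken_insert.iff_mpr hyp₀))

theorem neg_congr (h : Pf L Γ (Fm.iff p q)) : Pf L Γ (Fm.iff p.neg q.neg) :=
  iff_intro (.impI (.impE hyp₁ (h.weaken_insert.weaken_insert.iff_mpr hyp₀)))
    (.impI (.impE hyp₁ (h.weaken_insert.weaken_insert.iff_mp hyp₀)))

theorem and_congr {p' q' : Fm} (hp : Pf L Γ (Fm.iff p p')) (hq : Pf L Γ (Fm.iff q q')) :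
    Pf L Γ (Fm.iff (.and p q) (.and p' q')) :=
  iff_intro
    (.andI (hp.weaken_insert.iff_mp (.andE1 hyp₀)) (hq.weaken_insert.iff_mp (.andE2 hyp₀)))
    (.andI (hp.weaken_insert.iff_mpr (.andE1 hyp₀)) (hq.weaken_insert.iff_mpr (.andE2 hyp₀)))

theorem all_congr (h : Pf L (Fm.lift '' Γ) (Fm.iff p q)) :
    Pf L Γ (Fm.iff (.all p) (.all q)) := by
  refine iff_intro (.allI ?_) (.allI ?_) <;> rw [Set.image_insert_eq]
  · exact h.weaken_insert.iff_mp (of_lift_all hyp₀)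
  · exact h.weaken_insert.iff_mpr (of_lift_all hyp₀)

theorem neg_or_iff : Pf L Γ (Fm.iff (Fm.or p q).neg (.and p.neg q.neg)) :=
  iff_intro (.andI (.impI (.impE hyp₁ (.orI1 hyp₀))) (.impI (.impE hyp₁ (.orI2 hyp₀))))
    (.impI (.orE hyp₀ (.impE (.andE1 hyp₂) hyp₀) (.impE (.andE2 hyp₂) hyp₀)))

theorem neg_and_iff_neg_and_neg_neg :
    Pf L Γ (Fm.iff (Fm.and p q).neg (Fm.and p.neg.neg q.neg.neg).neg) := by
  refine iff_intro (.impI ?_) (.impI ?_)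
  · refine .impE (.andE2 hyp₀) (.impI ?_)
    refine .impE (.andE1 hyp₁) (.impI ?_)
    exact .impE (.ax (p := (Fm.and p q).neg) (by simp)) (.andI hyp₀ hyp₁)
  · exact .impE hyp₁ (.andI (.impI (.impE hyp₀ (.andE1 hyp₁))) (.impI (.impE hyp₀ (.andE2 hyp₁))))

theorem neg_ex_iff_all_neg : Pf L Γ (Fm.iff (Fm.ex p).neg (.all p.neg)) := by
  refine iff_intro (.allI ?_) (.impI (.exE hyp₀ ?_))
  · rw [Set.image_insert_eq]
    exact .impI (.impE (p := (Fm.ex p).lift) hyp₁ (lift_ex hyp₀))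
  · rw [Set.image_insert_eq, Set.image_insert_eq]
    exact .impE (of_lift_all (p := p.neg) (.ax (by simp))) hyp₀

end Pf

/-- for every formula in the ¬, ∧, ∨, ∀ fragment, minimal logic
proves φ^Kr ↔ φ^N. -/
theorem krivine_iff_godel_gentzen {φ : Fm} (h : KrFrag φ) :
    Pf .minimal ∅ (Fm.iff (Kr φ) (N φ)) := by
  induction h with
  | atom i a => exact .iff_refl
  | neg _ ih => exact ih.neg_congr
  | and _ _ ih₁ ih₂ => exact Pf.neg_or_iff.iff_trans (ih₁.and_congr ih₂)
  | or _ _ ih₁ ih₂ =>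
    exact Pf.neg_and_iff_neg_and_neg_neg.iff_trans (ih₁.neg_congr.and_congr ih₂.neg_congr).neg_congr
  | all _ ih =>
    exact Pf.neg_ex_iff_all_neg.iff_trans (Pf.all_congr (by rwa [Set.image_empty]))
end

section
/- The double-negation shift instance ∀x ¬¬A(x) → ¬¬∀x A(x) for a unary predicate A over an infinite domain is not provable in intuitionistic first-order logic. -/
/-- environment cons -/
def scons (d : ℕ) (σ : ℕ → ℕ) : ℕ → ℕ
  | 0 => d
  | n+1 => σ n

/-- Kripke forcing in the model with frame ℕ, constant domain ℕ,
where world `w` forces `A(k)` iff `k < w`. -/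
def force (w : ℕ) (σ : ℕ → ℕ) : Fm → Prop
  | .atom _ l => ∀ k ∈ l, σ k < w
  | .falsum => False
  | .and p q => force w σ p ∧ force w σ q
  | .or p q => force w σ p ∨ force w σ q
  | .imp p q => ∀ w', w ≤ w' → force w' σ p → force w' σ q
  | .all p => ∀ w', w ≤ w' → ∀ d, force w' (scons d σ) p
  | .ex p => ∃ d, force w (scons d σ) p

theorem force_mono {p : Fm} : ∀ {w w' : ℕ} {σ : ℕ → ℕ}, w ≤ w' →
    force w σ p → force w' σ p := by
  induction p with
  | atom i l => intro w w' σ h hf k hk; exact lt_of_lt_of_le (hf k hk) h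
  | falsum => intro _ _ _ _ hf; exact hf
  | and p q ihp ihq => intro w w' σ h hf; exact ⟨ihp h hf.1, ihq h hf.2⟩
  | or p q ihp ihq => intro w w' σ h hf; exact hf.imp (ihp h) (ihq h)
  | imp p q ihp ihq => intro w w' σ h hf w'' h'' hp; exact hf w'' (h.trans h'') hp
  | all p ih => intro w w' σ h hf w'' h'' d; exact hf w'' (h.trans h'') d
  | ex p ih => intro w w' σ h hf; obtain ⟨d, hd⟩ := hf; exact ⟨d, ih h hd⟩

theorem force_env_eq {p : Fm} {w : ℕ} {σ σ' : ℕ → ℕ} (h : ∀ n, σ n = σ' n) :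
    force w σ p ↔ force w σ' p := by
  rw [funext h]

theorem force_rename {p : Fm} : ∀ {w : ℕ} {σ f : ℕ → ℕ},
    force w σ (p.rename f) ↔ force w (fun n => σ (f n)) p := by
  induction p with
  | atom i l => intro w σ f; simp [Fm.rename, force]
  | falsum => intro w σ f; simp [Fm.rename, force]
  | and p q ihp ihq => intro w σ f; simp [Fm.rename, force, ihp, ihq]
  | or p q ihp ihq => intro w σ f; simp [Fm.rename, force, ihp, ihq]
  | imp p q ihp ihq => intro w σ f; simp [Fm.rename, force, ihp, ihq]
  | all p ih =>
    intro w σ f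
    show (∀ w', w ≤ w' → ∀ d, force w' (scons d σ) (p.rename _)) ↔
      (∀ w', w ≤ w' → ∀ d, force w' (scons d fun n => σ (f n)) p)
    constructor
    · intro h w' hw d
      exact (force_env_eq (by intro n; cases n <;> rfl)).mp (ih.mp (h w' hw d))
    · intro h w' hw d
      exact ih.mpr ((force_env_eq (by intro n; cases n <;> rfl)).mpr (h w' hw d))
  | ex p ih =>
    intro w σ f
    show (∃ d, force w (scons d σ) (p.rename _)) ↔
      (∃ d, force w (scons d fun n => σ (f n)) p)
    constructor
    · rintro ⟨d, hd⟩
      exact ⟨d, (force_env_eq (by intro n; cases n <;> rfl)).mp (ih.mp hd)⟩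
    · rintro ⟨d, hd⟩
      exact ⟨d, ih.mpr ((force_env_eq (by intro n; cases n <;> rfl)).mpr hd)⟩

theorem force_lift {p : Fm} {w : ℕ} {σ : ℕ → ℕ} {d : ℕ} :
    force w (scons d σ) p.lift ↔ force w σ p := by
  rw [Fm.lift, force_rename]; rfl

theorem force_inst {p : Fm} {w : ℕ} {σ : ℕ → ℕ} {k : ℕ} :
    force w σ (p.inst k) ↔ force w (scons (σ k) σ) p := by
  rw [Fm.inst, force_rename]
  exact force_env_eq (by intro n; cases n <;> rfl)

theorem soundness {L : Logic} {Γ : Set Fm} {p : Fm} (h : Pf L Γ p)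
    (hL : L ≠ .classical) :
    ∀ w σ, (∀ q ∈ Γ, force w σ q) → force w σ p := by
  induction h with
  | ax hp => intro w σ hΓ; exact hΓ _ hp
  | andI _ _ ih1 ih2 => intro w σ hΓ; exact ⟨ih1 hL w σ hΓ, ih2 hL w σ hΓ⟩
  | andE1 _ ih => intro w σ hΓ; exact (ih hL w σ hΓ).1
  | andE2 _ ih => intro w σ hΓ; exact (ih hL w σ hΓ).2
  | orI1 _ ih => intro w σ hΓ; exact Or.inl (ih hL w σ hΓ)
  | orI2 _ ih => intro w σ hΓ; exact Or.inr (ih hL w σ hΓ)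
  | orE _ _ _ ih ih1 ih2 =>
    intro w σ hΓ
    rcases ih hL w σ hΓ with h1 | h2
    · refine ih1 hL w σ ?_
      intro q hq
      rcases Set.mem_insert_iff.mp hq with rfl | hq
      · exact h1
      · exact hΓ q hq
    · refine ih2 hL w σ ?_
      intro q hq
      rcases Set.mem_insert_iff.mp hq with rfl | hq
      · exact h2
      · exact hΓ q hq
  | impI _ ih =>
    intro w σ hΓ w' hw hp
    refine ih hL w' σ ?_
    intro q hq
    rcases Set.mem_insert_iff.mp hq with rfl | hq
    · exact hp
    · exact force_mono hw (hΓ q hq)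
  | impE _ _ ih1 ih2 =>
    intro w σ hΓ
    exact ih1 hL w σ hΓ w le_rfl (ih2 hL w σ hΓ)
  | allI _ ih =>
    intro w σ hΓ w' hw d
    refine ih hL w' (scons d σ) ?_
    rintro q ⟨r, hr, rfl⟩
    exact force_lift.mpr (force_mono hw (hΓ r hr))
  | allE k _ ih =>
    intro w σ hΓ
    exact force_inst.mpr ((ih hL w σ hΓ) w le_rfl (σ k))
  | exI k _ ih =>
    intro w σ hΓ
    exact ⟨σ k, force_inst.mp (ih hL w σ hΓ)⟩
  | exE _ _ ih1 ih2 =>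
    intro w σ hΓ
    obtain ⟨d, hd⟩ := ih1 hL w σ hΓ
    refine force_lift.mp (ih2 hL w (scons d σ) ?_)
    intro q hq
    rcases Set.mem_insert_iff.mp hq with rfl | ⟨r, hr, rfl⟩
    · exact hd
    · exact force_lift.mpr (hΓ r hr)
  | exfalso _ _ ih =>
    intro w σ hΓ
    exact absurd (ih hL w σ hΓ) (by simp [force])
  | em => exact absurd rfl hL

/-- the double-negation shift instance
∀x ¬¬A(x) → ¬¬∀x A(x), for a unary predicate A, is not provable in
intuitionistic first-order logic. -/
theorem dns_not_intuitionistically_provable :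
    ¬ Pf .intuitionistic ∅
      (.imp (.all (Fm.neg (Fm.neg (.atom 0 [0]))))
            (Fm.neg (Fm.neg (.all (.atom 0 [0]))))) := by
  intro h
  have hs := soundness h (by simp) 0 id (by simp)
  -- force 0 id of the implication
  have hP : force 0 id (.all (Fm.neg (Fm.neg (.atom 0 [0])))) := by
    intro w' _ d w'' _ hneg
    exact hneg (max w'' (d + 1)) (le_max_left _ _)
      (by intro k hk; simp at hk; subst hk
          exact lt_of_lt_of_le (Nat.lt_succ_self d) (le_max_right _ _))
  have hQ := hs 0 le_rfl hP
  refine hQ 0 (le_rfl) ?_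
  intro w'' _ hall
  obtain hd := hall w'' le_rfl w''
  exact absurd (hd 0 (List.mem_singleton.mpr rfl)) (by simp [scons])
end
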